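/- arXiv:1909.12387 — 7 statements merged into one kernel-verified Lean document; each statement's English description precedes it below -/
import Mathlib

section
/- Any 1-strongly convex function (with respect to the ℓ∞ norm) on the ℓ∞ ball of radius r in ℝⁿ has range at least n·r²/2; that is, if d is strongly convex on B = {x ∈ ℝⁿ : ‖x‖_∞ ≤ r}, then sup_{x∈B} d(x) − inf_{x∈B} d(x) ≥ n·r²/2. -/
theorem strongly_convex_range_on_linf_ball
    (n : ℕ) (r : ℝ) (hr : 0 ≤ r) (d : (Fin n → ℝ) → ℝ)
    (hsc : ∀ x y : Fin n → ℝ, ∀ l : ℝ, 0 ≤ l → l ≤ 1 →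
      d (l • x + (1 - l) • y) ≤ l * d x + (1 - l) * d y - l * (1 - l) / 2 * ‖x - y‖ ^ 2) :
    sSup (d '' {x : Fin n → ℝ | ‖x‖ ≤ r}) - sInf (d '' {x : Fin n → ℝ | ‖x‖ ≤ r})
      ≥ n * r ^ 2 / 2 := by
  set B : Set (Fin n → ℝ) := {x : Fin n → ℝ | ‖x‖ ≤ r} with hB
  -- d is convex
  have hconv : ConvexOn ℝ Set.univ d := by
    refine ⟨convex_univ, fun x _ y _ a b ha hb hab => ?_⟩
    have := hsc x y a ha (by linarith)
    have hb' : b = 1 - a := by linarith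
    have hnn : 0 ≤ a * (1 - a) / 2 * ‖x - y‖ ^ 2 := by
      have : 0 ≤ a * (1 - a) := mul_nonneg ha (by linarith)
      positivity
    rw [hb']
    simp only [smul_eq_mul]
    linarith
  -- key midpoint inequality
  have hmid : ∀ x : Fin n → ℝ, ∀ k : Fin n,
      d x ≤ (d (x + Pi.single k r) + d (x - Pi.single k r)) / 2 - r ^ 2 / 2 := by
    intro x k
    have h := hsc (x + Pi.single k r) (x - Pi.single k r) (1/2) (by norm_num) (by norm_num)
    have e1 : (1/2 : ℝ) • (x + Pi.single k r) + (1 - 1/2 : ℝ) • (x - Pi.single k r) = x := by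
      norm_num
      module
    have e2 : (x + Pi.single k r) - (x - Pi.single k r) = Pi.single k (2 * r) := by
      funext i
      by_cases hik : i = k
      · subst hik; simp [Pi.single_apply]; ring
      · simp [Pi.single_apply, hik]
    rw [e1, e2] at h
    have e3 : ‖(Pi.single k (2 * r) : Fin n → ℝ)‖ = 2 * r := by
      rw [Pi.norm_single, Real.norm_eq_abs, abs_of_nonneg (by linarith)]
    rw [e3] at h
    nlinarith [h]
  -- membership in B via coordinates
  have hmem : ∀ x : Fin n → ℝ, (∀ i, |x i| ≤ r) → x ∈ B := by
    intro x hx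
    simp only [hB, Set.mem_setOf_eq]
    exact (pi_norm_le_iff_of_nonneg hr).2 fun i => by
      rw [Real.norm_eq_abs]; exact hx i
  -- construct point with large value
  have key : ∀ k : ℕ, k ≤ n → ∃ x : Fin n → ℝ, (∀ i, |x i| ≤ r) ∧
      (∀ i : Fin n, k ≤ (i : ℕ) → x i = 0) ∧ d 0 + k * r ^ 2 / 2 ≤ d x := by
    intro k hk
    induction k with
    | zero => exact ⟨0, fun i => by simp [hr], fun i _ => rfl, by simp⟩
    | succ m ih =>
      obtain ⟨x, hx1, hx2, hx3⟩ := ih (Nat.le_of_succ_le hk)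
      have hm : m < n := hk
      set j : Fin n := ⟨m, hm⟩
      have hxj : x j = 0 := hx2 j le_rfl
      have h := hmid x j
      -- at least one of the two points works
      have hbig : d x + r ^ 2 / 2 ≤ max (d (x + Pi.single j r)) (d (x - Pi.single j r)) := by
        rcases le_total (d (x + Pi.single j r)) (d (x - Pi.single j r)) with hle | hle
        · rw [max_eq_right hle]; linarith
        · rw [max_eq_left hle]; linarith
      rcases le_total (d (x + Pi.single j r)) (d (x - Pi.single j r)) with hle | hle
      · refine ⟨x - Pi.single j r, ?_, ?_, ?_⟩
        · intro i
          by_cases hij : i = j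
          · subst hij; simp [hxj, abs_of_nonneg hr]
          · simp [Pi.single_apply, hij, hx1 i]
        · intro i hi
          have hij : i ≠ j := by
            intro hij; subst hij; simp [j] at hi
          simp [Pi.single_apply, hij, hx2 i (by omega)]
        · rw [max_eq_right hle] at hbig
          push_cast
          linarith
      · refine ⟨x + Pi.single j r, ?_, ?_, ?_⟩
        · intro i
          by_cases hij : i = j
          · subst hij; simp [hxj, abs_of_nonneg hr]
          · simp [Pi.single_apply, hij, hx1 i]
        · intro i hi
          have hij : i ≠ j := by
            intro hij; subst hij; simp [j] at hi
          simp [Pi.single_apply, hij, hx2 i (by omega)]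
        · rw [max_eq_left hle] at hbig
          push_cast
          linarith
  obtain ⟨z, hz1, _, hz3⟩ := key n le_rfl
  have hzB : z ∈ B := hmem z hz1
  have h0B : (0 : Fin n → ℝ) ∈ B := hmem 0 (fun i => by simp [hr])
  -- bounded above via vertices
  have hBhull : B ⊆ convexHull ℝ (Set.pi Set.univ (fun _ : Fin n => ({-r, r} : Set ℝ))) := by
    intro x hx
    rw [convexHull_pi]
    intro i _
    rw [convexHull_pair, segment_eq_Icc (by linarith : -r ≤ r)]
    have := (pi_norm_le_iff_of_nonneg hr).1 hx i
    rw [Real.norm_eq_abs, abs_le] at this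
    exact this
  have hVfin : (Set.pi Set.univ (fun _ : Fin n => ({-r, r} : Set ℝ))).Finite :=
    Set.Finite.pi (fun _ => Set.toFinite _)
  have hVne : (Set.pi Set.univ (fun _ : Fin n => ({-r, r} : Set ℝ))).Nonempty :=
    ⟨fun _ => r, fun i _ => by simp⟩
  have himgfin : (d '' (Set.pi Set.univ (fun _ : Fin n => ({-r, r} : Set ℝ)))).Finite :=
    hVfin.image d
  obtain ⟨M, hM⟩ := himgfin.bddAbove
  have hub : ∀ x ∈ B, d x ≤ M := by
    intro x hx
    obtain ⟨v, hv, hdv⟩ := hconv.exists_ge_of_mem_convexHull (Set.subset_univ _) (hBhull hx)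
    exact hdv.trans (hM ⟨v, hv, rfl⟩)
  have hbddA : BddAbove (d '' B) := ⟨M, by rintro _ ⟨x, hx, rfl⟩; exact hub x hx⟩
  -- bounded below: d x ≥ 2 d 0 - d (-x) ≥ 2 d 0 - M - r^2/2-ish
  have hbddB : BddBelow (d '' B) := by
    refine ⟨2 * d 0 - M, ?_⟩
    rintro _ ⟨x, hx, rfl⟩
    have hnx : -x ∈ B := by simpa [hB, Set.mem_setOf_eq] using hx
    have h := hsc x (-x) (1/2) (by norm_num) (by norm_num)
    have e1 : (1/2 : ℝ) • x + (1 - 1/2 : ℝ) • (-x) = 0 := by module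
    rw [e1] at h
    have hM' := hub (-x) hnx
    nlinarith [sq_nonneg ‖x - -x‖]
  have hsup : d z ≤ sSup (d '' B) := le_csSup hbddA ⟨z, hzB, rfl⟩
  have hinf : sInf (d '' B) ≤ d 0 := csInf_le hbddB ⟨0, h0B, rfl⟩
  linarith
end

section
/- For a symmetric 2×2 real matrix A and B = [[0,−1],[1,0]], the 4×4 block matrix [[A,−B],[B,A]] is positive semidefinite if and only if A is positive semidefinite and det(A) ≥ 1. -/
/-!
Identify `ℝ⁴ = ℝ² × ℝ²` with `ℂ²` via `(x, y) ↦ x + i y`. The block matrix `[[A, -B], [B, A]]`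
is then the realification of the Hermitian matrix `H = A + iB = [[a, b - i], [b + i, c]]`, and its
quadratic form at `(x, y)` is `z* H z`. Completing the square,
`a · z* H z = |a z₀ + (b - i) z₁|² + (det A - 1) |z₁|²`,
so `H ⪰ 0` as soon as `a > 0` and `det A ≥ 1`. Conversely, `a > 0` is forced because the
off-diagonal entry `b - i` of `H` never vanishes, and `z = (b - i, -a)` gives
`z* H z = a (det A - 1)`. Finally, for a symmetric `2 × 2` matrix with positive determinant,
positive semidefiniteness just means `a > 0`.
-/

open Matrix

namespace Matrix

section Realification

variable {n R : Type*} [Fintype n] [CommRing R] [PartialOrder R] [StarRing R] [TrivialStar R]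

theorem posSemidef_fromBlocks_neg_iff {A B : Matrix n n R} (hA : A.IsSymm) (hB : Bᵀ = -B) :
    (fromBlocks A (-B) B A).PosSemidef ↔
      ∀ x y : n → R, 0 ≤ x ⬝ᵥ (A *ᵥ x) + y ⬝ᵥ (A *ᵥ y) + 2 * (y ⬝ᵥ (B *ᵥ x)) := by
  have hHerm : (fromBlocks A (-B) B A).IsHermitian := by
    refine IsHermitian.fromBlocks (isHermitian_iff_isSymm.2 hA) ?_ (isHermitian_iff_isSymm.2 hA)
    rw [conjTranspose_eq_transpose_of_trivial, transpose_neg, hB, neg_neg]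
  have hform (x y : n → R) : Sum.elim x y ⬝ᵥ (fromBlocks A (-B) B A *ᵥ Sum.elim x y) =
      x ⬝ᵥ (A *ᵥ x) + y ⬝ᵥ (A *ᵥ y) + 2 * (y ⬝ᵥ (B *ᵥ x)) := by
    have hskew : x ⬝ᵥ (B *ᵥ y) = -(y ⬝ᵥ (B *ᵥ x)) := by
      rw [dotProduct_mulVec, ← mulVec_transpose, hB, neg_mulVec, neg_dotProduct, dotProduct_comm]
    simp only [fromBlocks_mulVec, sumElim_dotProduct_sumElim, Sum.elim_comp_inl,
      Sum.elim_comp_inr, neg_mulVec, dotProduct_add, dotProduct_neg, hskew]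
    ring
  simp only [posSemidef_iff_dotProduct_mulVec, star_trivial, hHerm, true_and, ← hform]
  exact ⟨fun h x y => h _, fun h v => Sum.elim_comp_inl_inr v ▸ h _ _⟩

end Realification

theorem dotProduct_mulVec_fin_two {R : Type*} [CommRing R] (A : Matrix (Fin 2) (Fin 2) R)
    (x : Fin 2 → R) :
    x ⬝ᵥ (A *ᵥ x) = A 0 0 * x 0 ^ 2 + (A 0 1 + A 1 0) * x 0 * x 1 + A 1 1 * x 1 ^ 2 := by
  simp only [vec2_dotProduct, mulVec]
  ring

theorem dotProduct_rot_mulVec {R : Type*} [CommRing R] (x y : Fin 2 → R) :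
    y ⬝ᵥ (!![0, -1; 1, 0] *ᵥ x) = x 0 * y 1 - x 1 * y 0 := by
  simp only [vec2_dotProduct, mulVec, of_apply, cons_val_zero, cons_val_one, cons_val_fin_one]
  ring

theorem posSemidef_iff_pos_of_det_pos {A : Matrix (Fin 2) (Fin 2) ℝ} (hA : A.IsSymm)
    (hdet : 0 < A.det) : A.PosSemidef ↔ 0 < A 0 0 := by
  have hsymm : A 1 0 = A 0 1 := hA.apply 0 1
  rw [det_fin_two, hsymm] at hdet
  refine ⟨fun hpsd => ?_, fun ha => ?_⟩
  · refine hpsd.diag_nonneg.lt_of_ne fun ha => ?_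
    rw [← ha, zero_mul, zero_sub] at hdet
    nlinarith [mul_self_nonneg (A 0 1)]
  · refine posSemidef_iff_dotProduct_mulVec.2 ⟨isHermitian_iff_isSymm.2 hA, fun x => ?_⟩
    rw [star_trivial, dotProduct_mulVec_fin_two, hsymm]
    have hsq : A 0 0 * (A 0 0 * x 0 ^ 2 + (A 0 1 + A 0 1) * x 0 * x 1 + A 1 1 * x 1 ^ 2) =
        (A 0 0 * x 0 + A 0 1 * x 1) ^ 2 + (A 0 0 * A 1 1 - A 0 1 * A 0 1) * x 1 ^ 2 := by ring
    exact nonneg_of_mul_nonneg_right (hsq ▸ by positivity) ha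

theorem forall_nonneg_add_two_mul_rot_iff {A : Matrix (Fin 2) (Fin 2) ℝ} (hA : A.IsSymm) :
    (∀ x y : Fin 2 → ℝ,
      0 ≤ x ⬝ᵥ (A *ᵥ x) + y ⬝ᵥ (A *ᵥ y) + 2 * (y ⬝ᵥ (!![0, -1; 1, 0] *ᵥ x))) ↔
      0 < A 0 0 ∧ 1 ≤ A.det := by
  have hsymm : A 1 0 = A 0 1 := hA.apply 0 1
  simp only [dotProduct_mulVec_fin_two, dotProduct_rot_mulVec, det_fin_two, hsymm]
  set a := A 0 0
  set b := A 0 1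
  set c := A 1 1
  refine ⟨fun h => ?_, fun ⟨ha, hdet⟩ x y => ?_⟩
  · -- in complex coordinates the last two test vectors are `(c + 1, -(b + i))` and `(b - i, -a)`
    have hc := h ![0, 1] 0
    have hpos := h ![c + 1, -b] ![0, -1]
    have hdet := h ![b, -a] ![-1, 0]
    simp only [cons_val_zero, cons_val_one, cons_val_fin_one, Pi.zero_apply] at hc hpos hdet
    have ha : 0 < a := by nlinarith [sq_nonneg b, sq_nonneg (c + 1)]
    exact ⟨ha, by nlinarith⟩
  · have hsq : a * (a * x 0 ^ 2 + (b + b) * x 0 * x 1 + c * x 1 ^ 2 +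
        (a * y 0 ^ 2 + (b + b) * y 0 * y 1 + c * y 1 ^ 2) + 2 * (x 0 * y 1 - x 1 * y 0)) =
        (a * x 0 + b * x 1 + y 1) ^ 2 + (a * y 0 + b * y 1 - x 1) ^ 2 +
          (a * c - b * b - 1) * (x 1 ^ 2 + y 1 ^ 2) := by ring
    have : 0 ≤ a * c - b * b - 1 := by linarith
    exact nonneg_of_mul_nonneg_right (hsq ▸ by positivity) ha

end Matrix

theorem block_psd_iff_psd_and_det_ge_one
    (A : Matrix (Fin 2) (Fin 2) ℝ) (hA : A.IsSymm)
    (B : Matrix (Fin 2) (Fin 2) ℝ) (hB : B = !![0, -1; 1, 0]) :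
    (Matrix.fromBlocks A (-B) B A).PosSemidef ↔ A.PosSemidef ∧ 1 ≤ A.det := by
  subst hB
  have hskew : (!![0, -1; 1, 0] : Matrix (Fin 2) (Fin 2) ℝ)ᵀ = -!![0, -1; 1, 0] := by
    ext i j
    fin_cases i <;> fin_cases j <;> simp
  rw [posSemidef_fromBlocks_neg_iff hA hskew, forall_nonneg_add_two_mul_rot_iff hA]
  exact and_congr_left fun hdet => (posSemidef_iff_pos_of_det_pos hA (by linarith)).symm
end

section
/- For β ≥ 2, a ∈ (0,1], b > 0, the Hessian of γ_β(a,b) = b·a·log a + β·b·log b, namely [[β/b, 1+log a],[1+log a, b/a]], satisfies: the block matrix [[H,−B],[B,H]] is positive semidefinite, where H = d²γ_β(a,b) and B = [[0,−1],[1,0]]. -/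
/-! With `c = 1 + log a`, the matrix is the realification of the Hermitian matrix
`[[β/b, c - i], [c + i, b/a]]`, which is positive semidefinite as soon as
`c² + 1 ≤ (β/b)(b/a) = β/a`. Writing `a = exp(-t)` with `t ≥ 0`, this follows from
`a (c² + 1) = e⁻ᵗ((1 - t)² + 1) ≤ 2 ≤ β`, i.e. from
`1 - t + t²/2 ≤ 1 + t + t²/2 ≤ eᵗ`. -/

open Matrix

lemma mul_one_add_log_sq_add_one_le_two {a : ℝ} (ha₀ : 0 < a) (ha₁ : a ≤ 1) :
    a * ((1 + Real.log a) ^ 2 + 1) ≤ 2 := by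
  set t := -Real.log a
  have ht : 0 ≤ t := neg_nonneg.2 (Real.log_nonpos ha₀.le ha₁)
  have ha : a = Real.exp (-t) := by simp [t, Real.exp_log ha₀]
  have hexp : 1 + t + t ^ 2 / 2 ≤ Real.exp t := Real.quadratic_le_exp_of_nonneg ht
  have hprod : Real.exp (-t) * Real.exp t = 1 := by rw [← Real.exp_add]; simp
  have hlog : Real.log a = -t := by simp [t]
  rw [hlog, ha]
  nlinarith [Real.exp_pos (-t), mul_nonneg (Real.exp_pos (-t)).le ht]

theorem posSemidef_fromBlocks_of_sq_add_sq_le_mul {p q c s : ℝ} (hp : 0 < p)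
    (h : c ^ 2 + s ^ 2 ≤ p * q) :
    (fromBlocks !![p, c; c, q] (-!![0, -s; s, 0]) !![0, -s; s, 0]
      !![p, c; c, q]).PosSemidef := by
  rw [posSemidef_iff_dotProduct_mulVec]
  refine ⟨?_, fun x => ?_⟩
  · ext (i | i) (j | j) <;> fin_cases i <;> fin_cases j <;> simp
  · set u₀ := x (.inl 0); set u₁ := x (.inl 1)
    set v₀ := x (.inr 0); set v₁ := x (.inr 1)
    have hform : star x ⬝ᵥ (fromBlocks !![p, c; c, q] (-!![0, -s; s, 0])
        !![0, -s; s, 0] !![p, c; c, q] *ᵥ x) = p * u₀ ^ 2 + 2 * c * u₀ * u₁ + q * u₁ ^ 2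
          + (p * v₀ ^ 2 + 2 * c * v₀ * v₁ + q * v₁ ^ 2) + 2 * s * (u₀ * v₁ - u₁ * v₀) := by
      simp [dotProduct, mulVec, Fin.sum_univ_two, u₀, u₁, v₀, v₁]
      ring
    have hsos : p * (p * u₀ ^ 2 + 2 * c * u₀ * u₁ + q * u₁ ^ 2
          + (p * v₀ ^ 2 + 2 * c * v₀ * v₁ + q * v₁ ^ 2) + 2 * s * (u₀ * v₁ - u₁ * v₀)) =
        (p * u₀ + c * u₁ + s * v₁) ^ 2 + (p * v₀ + c * v₁ - s * u₁) ^ 2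
          + (p * q - c ^ 2 - s ^ 2) * (u₁ ^ 2 + v₁ ^ 2) := by ring
    rw [hform]
    refine nonneg_of_mul_nonneg_right ?_ hp
    rw [hsos]
    have : 0 ≤ p * q - c ^ 2 - s ^ 2 := by linarith
    positivity

theorem gadget_hessian_area_convex
    (β a b : ℝ) (hβ : 2 ≤ β) (ha : a ∈ Set.Ioc (0 : ℝ) 1) (hb : 0 < b)
    (H B : Matrix (Fin 2) (Fin 2) ℝ)
    (hH : H = !![β / b, 1 + Real.log a; 1 + Real.log a, b / a])
    (hB : B = !![0, -1; 1, 0]) :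
    (Matrix.fromBlocks H (-B) B H).PosSemidef := by
  obtain ⟨ha₀, ha₁⟩ := ha
  subst hH hB
  have hdet : (1 + Real.log a) ^ 2 + 1 ^ 2 ≤ β / b * (b / a) := by
    rw [div_mul_div_cancel₀ hb.ne', le_div_iff₀ ha₀, one_pow, mul_comm]
    linarith [mul_one_add_log_sq_add_one_le_two ha₀ ha₁]
  exact posSemidef_fromBlocks_of_sq_add_sq_le_mul (div_pos (by linarith) hb) hdet
end

section
/- For β ≥ 2, a ∈ (0,1], b > 0, the determinant of the Hessian of γ_β(a,b) = b·a·log a + β·b·log b equals β/a − (1 + log a)² and is at least 1. -/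
open Real

theorem Matrix.det_fin_two_div_div {K : Type*} [Field K] {a b : K} (β c : K) (hb : b ≠ 0) :
    !![β / b, c; c, b / a].det = β / a - c ^ 2 := by
  rw [Matrix.det_fin_two_of, div_mul_div_comm, mul_comm b, mul_div_mul_right _ _ hb, sq]

theorem Real.one_sub_log_add_log_sq_div_two_le_inv {a : ℝ} (ha₀ : 0 < a) (ha₁ : a ≤ 1) :
    1 - log a + log a ^ 2 / 2 ≤ a⁻¹ := by
  have h := quadratic_le_exp_of_nonneg (neg_nonneg.2 (log_nonpos ha₀.le ha₁))
  rwa [exp_neg, exp_log ha₀, neg_sq, ← sub_eq_add_neg] at h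

theorem one_le_div_sub_one_add_log_sq {β a : ℝ} (hβ : 2 ≤ β) (ha₀ : 0 < a) (ha₁ : a ≤ 1) :
    1 ≤ β / a - (1 + log a) ^ 2 := by
  have hinv := one_sub_log_add_log_sq_div_two_le_inv ha₀ ha₁
  have hlog : log a ≤ 0 := log_nonpos ha₀.le ha₁
  have hβa : 2 / a ≤ β / a := div_le_div_of_nonneg_right hβ ha₀.le
  rw [div_eq_mul_inv 2] at hβa
  -- `2 / a ≥ 2 - 2 log a + log a ^ 2` exceeds `1 + (1 + log a) ^ 2` by `-4 log a ≥ 0`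
  nlinarith

theorem gadget_hessian_det
    (β a b : ℝ) (hβ : 2 ≤ β) (ha : a ∈ Set.Ioc (0 : ℝ) 1) (hb : 0 < b) :
    (!![β / b, 1 + Real.log a; 1 + Real.log a, b / a] : Matrix (Fin 2) (Fin 2) ℝ).det
        = β / a - (1 + Real.log a) ^ 2 ∧
      1 ≤ β / a - (1 + Real.log a) ^ 2 :=
  ⟨Matrix.det_fin_two_div_div β _ hb.ne', one_le_div_sub_one_add_log_sq hβ ha.1 ha.2⟩
end

section
/- Let (x,y,z) ∈ B × Δ⁺_p × Δ⁺_c with B = {x ∈ ℝⁿ : 0 ≤ x ≤ 1}, and let L(x,y,z) = yᵀ(Px − 1_p) + zᵀ(1_c − Cx). If sup over (x̄,ȳ,z̄) ∈ B × Δ⁺_p × Δ⁺_c of L(x,ȳ,z̄) − L(x̄,y,z) is at most ε, then either x satisfies Px ≤ (1+ε)·1_p and Cx ≥ (1−ε)·1_c, or yᵀ(Px̄ − 1_p) + zᵀ(−Cx̄ + 1_c) > 0 for all x̄ ∈ B (certifying infeasibility). -/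
theorem saddle_to_approx_mpc
    (p c n : ℕ) (P : Matrix (Fin p) (Fin n) ℝ) (C : Matrix (Fin c) (Fin n) ℝ)
    (hP : ∀ i j, 0 ≤ P i j) (hC : ∀ i j, 0 ≤ C i j) (ε : ℝ)
    (L : (Fin n → ℝ) → (Fin p → ℝ) → (Fin c → ℝ) → ℝ)
    (hL : ∀ x' y' z', L x' y' z' =
      (∑ i, y' i * (P.mulVec x' i - 1)) + ∑ i, z' i * (1 - C.mulVec x' i))
    (x : Fin n → ℝ) (y : Fin p → ℝ) (z : Fin c → ℝ)
    (hx : ∀ j, 0 ≤ x j ∧ x j ≤ 1)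
    (hy : (∀ i, 0 ≤ y i) ∧ ∑ i, y i ≤ 1)
    (hz : (∀ i, 0 ≤ z i) ∧ ∑ i, z i ≤ 1)
    (hgap : ∀ (xb : Fin n → ℝ) (yb : Fin p → ℝ) (zb : Fin c → ℝ),
      (∀ j, 0 ≤ xb j ∧ xb j ≤ 1) →
      ((∀ i, 0 ≤ yb i) ∧ ∑ i, yb i ≤ 1) →
      ((∀ i, 0 ≤ zb i) ∧ ∑ i, zb i ≤ 1) →
      L x yb zb - L xb y z ≤ ε) :
    ((∀ i, P.mulVec x i ≤ 1 + ε) ∧ (∀ i, 1 - ε ≤ C.mulVec x i)) ∨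
      (∀ xb : Fin n → ℝ, (∀ j, 0 ≤ xb j ∧ xb j ≤ 1) →
        0 < (∑ i, y i * (P.mulVec xb i - 1)) + ∑ i, z i * (1 - C.mulVec xb i)) := by
  by_cases hcert : ∀ xb : Fin n → ℝ, (∀ j, 0 ≤ xb j ∧ xb j ≤ 1) →
      0 < (∑ i, y i * (P.mulVec xb i - 1)) + ∑ i, z i * (1 - C.mulVec xb i)
  · exact Or.inr hcert
  · left
    push_neg at hcert
    obtain ⟨xb, hxb, hle⟩ := hcert
    have hLxb : L xb y z ≤ 0 := by rw [hL]; exact hle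
    constructor
    · intro i₀
      have h := hgap xb (fun i => if i = i₀ then 1 else 0) 0 hxb
        ⟨fun i => by positivity, by simp⟩ ⟨fun i => le_refl 0, by simp⟩
      rw [hL] at h
      simp only [ite_mul, one_mul, zero_mul, Finset.sum_ite_eq', Finset.mem_univ,
        if_true, Pi.zero_apply, Finset.sum_const_zero, add_zero] at h
      linarith
    · intro i₀
      have h := hgap xb 0 (fun i => if i = i₀ then 1 else 0) hxb
        ⟨fun i => le_refl 0, by simp⟩ ⟨fun i => by positivity, by simp⟩
      rw [hL] at h
      simp only [ite_mul, one_mul, zero_mul, Finset.sum_ite_eq', Finset.mem_univ,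
        if_true, Pi.zero_apply, Finset.sum_const_zero, zero_add] at h
      linarith
end

section
/- Fix c > 0 and vectors a¹ ∈ ℝᵖ, v ∈ ℝᵖ. The maximizer over y ∈ Δ⁺_p = {y ≥ 0, ∑ yᵢ ≤ 1} of the function y ↦ yᵀa¹ − ∑ᵢ (vᵢ yᵢ + 2c·yᵢ log yᵢ) is given by y = g if ‖g‖₁ ≤ 1 and y = g/‖g‖₁ otherwise, where gᵢ = exp((a¹ᵢ − vᵢ)/(2c) − 1). -/
lemma key_ineq (t u : ℝ) (ht : 0 ≤ t) : t * (u - Real.log t) ≤ Real.exp (u - 1) := by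
  rcases ht.eq_or_lt with h | h
  · rw [← h]; simp [Real.exp_pos _ |>.le]
  · have h1 := Real.add_one_le_exp (u - 1 - Real.log t)
    have h2 : Real.exp (u - 1 - Real.log t) = Real.exp (u - 1) / t := by
      rw [Real.exp_sub, Real.exp_log h]
    rw [h2] at h1
    have h3 : t * ((u - 1 - Real.log t) + 1) ≤ t * (Real.exp (u - 1) / t) :=
      mul_le_mul_of_nonneg_left h1 h.le
    rw [mul_div_cancel₀ _ h.ne'] at h3
    nlinarith [h3]

lemma coord_ineq (c lam t A V : ℝ) (hc : 0 < c) (ht : 0 ≤ t) :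
    t * A - (V * t + 2 * c * (t * Real.log t)) - 2 * c * lam * t ≤
      Real.exp ((A - V) / (2 * c) - 1 - lam) * A
        - (V * Real.exp ((A - V) / (2 * c) - 1 - lam)
            + 2 * c * (Real.exp ((A - V) / (2 * c) - 1 - lam)
                * Real.log (Real.exp ((A - V) / (2 * c) - 1 - lam))))
        - 2 * c * lam * Real.exp ((A - V) / (2 * c) - 1 - lam) := by
  set u : ℝ := (A - V) / (2 * c) - lam with hu
  have hAV : A - V = 2 * c * (u + lam) := by
    rw [hu]; field_simp; ring
  have hmexp : (A - V) / (2 * c) - 1 - lam = u - 1 := by rw [hu]; ring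
  rw [hmexp, Real.log_exp]
  have hk := key_ineq t u ht
  have h2 : 2 * c * (t * (u - Real.log t)) ≤ 2 * c * Real.exp (u - 1) :=
    mul_le_mul_of_nonneg_left hk (by linarith)
  have p1 : t * (A - V) = 2 * c * (u + lam) * t := by rw [hAV]; ring
  have p2 : Real.exp (u - 1) * (A - V) = 2 * c * (u + lam) * Real.exp (u - 1) := by
    rw [hAV]; ring
  nlinarith [h2, p1, p2]

lemma master_bound (p : ℕ) (c lam : ℝ) (hc : 0 < c) (hlam : 0 ≤ lam)
    (a1 v m : Fin p → ℝ)
    (hm : ∀ i, m i = Real.exp ((a1 i - v i) / (2 * c) - 1 - lam))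
    (hm1 : (∑ i, m i) = 1 ∨ lam = 0)
    (y : Fin p → ℝ) (hy : ∀ i, 0 ≤ y i) (hy1 : ∑ i, y i ≤ 1) :
    (∑ i, y i * a1 i) - (∑ i, (v i * y i + 2 * c * (y i * Real.log (y i)))) ≤
      (∑ i, m i * a1 i) - (∑ i, (v i * m i + 2 * c * (m i * Real.log (m i)))) := by
  have hcoord : ∀ i ∈ Finset.univ,
      y i * a1 i - (v i * y i + 2 * c * (y i * Real.log (y i))) - 2 * c * lam * y i ≤
      m i * a1 i - (v i * m i + 2 * c * (m i * Real.log (m i))) - 2 * c * lam * m i := by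
    intro i _
    rw [hm i]
    exact coord_ineq c lam (y i) (a1 i) (v i) hc (hy i)
  have hsum := Finset.sum_le_sum hcoord
  have e : ∀ z : Fin p → ℝ,
      ∑ i, (z i * a1 i - (v i * z i + 2 * c * (z i * Real.log (z i))) - 2 * c * lam * z i)
      = (∑ i, z i * a1 i) - (∑ i, (v i * z i + 2 * c * (z i * Real.log (z i))))
          - 2 * c * lam * (∑ i, z i) := by
    intro z
    rw [Finset.sum_sub_distrib, Finset.sum_sub_distrib, ← Finset.mul_sum]
  rw [e y, e m] at hsum
  rcases hm1 with h1 | h1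
  · rw [h1] at hsum
    have h2 : 2 * c * lam * (∑ i, y i) ≤ 2 * c * lam * 1 :=
      mul_le_mul_of_nonneg_left hy1 (by positivity)
    linarith
  · rw [h1] at hsum; simp at hsum; linarith

theorem dual_oracle_maximizer
    (p : ℕ) (cst : ℝ) (hc : 0 < cst) (a1 v : Fin p → ℝ)
    (g : Fin p → ℝ) (hg : ∀ i, g i = Real.exp ((a1 i - v i) / (2 * cst) - 1))
    (f : (Fin p → ℝ) → ℝ)
    (hf : ∀ y, f y = (∑ i, y i * a1 i) - ∑ i, (v i * y i + 2 * cst * (y i * Real.log (y i)))) :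
    ((∑ i, g i ≤ 1 →
        (∀ i, 0 ≤ g i) ∧ (∑ i, g i ≤ 1) ∧
        ∀ y : Fin p → ℝ, (∀ i, 0 ≤ y i) → (∑ i, y i ≤ 1) → f y ≤ f g) ∧
      (1 < ∑ i, g i →
        (∀ i, 0 ≤ g i / ∑ j, g j) ∧ (∑ i, g i / ∑ j, g j ≤ 1) ∧
        ∀ y : Fin p → ℝ, (∀ i, 0 ≤ y i) → (∑ i, y i ≤ 1) →
          f y ≤ f (fun i => g i / ∑ j, g j))) := by
  have hgpos : ∀ i, 0 < g i := fun i => by rw [hg i]; exact Real.exp_pos _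
  constructor
  · intro hS
    refine ⟨fun i => (hgpos i).le, hS, fun y hy hy1 => ?_⟩
    rw [hf y, hf g]
    apply master_bound p cst 0 hc le_rfl a1 v g _ (Or.inr rfl) y hy hy1
    intro i; rw [hg i]; ring_nf
  · intro hS
    have hSpos : 0 < ∑ j, g j := by linarith
    have hmdef : ∀ i, g i / (∑ j, g j) =
        Real.exp ((a1 i - v i) / (2 * cst) - 1 - Real.log (∑ j, g j)) := by
      intro i
      rw [Real.exp_sub, Real.exp_log hSpos, hg i]
    have hsum1 : (∑ i, g i / ∑ j, g j) = 1 := by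
      rw [← Finset.sum_div, div_self hSpos.ne']
    refine ⟨fun i => div_nonneg (hgpos i).le hSpos.le, hsum1.le, fun y hy hy1 => ?_⟩
    rw [hf y, hf (fun i => g i / ∑ j, g j)]
    exact master_bound p cst (Real.log (∑ j, g j)) hc
      (Real.log_nonneg (by linarith)) a1 v (fun i => g i / ∑ j, g j)
      hmdef (Or.inl hsum1) y hy hy1
end

section
/- Let G be a graph with maximum subgraph density ρ* = max_{S⊆V, S≠∅} |E(S)|/|S|. Then the optimal value of the LP: maximize ∑_{e∈E} y_e subject to y_e ≤ x_u and y_e ≤ x_v for each edge e = uv, ∑_{v∈V} x_v ≤ 1, and x,y ≥ 0, equals ρ*. -/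
/-!
A set `S` is turned into the feasible point `x = 𝟙_S / |S|`, `y = 𝟙_{E(S)} / |S|` of value
`|E(S)| / |S|`, so the LP optimum is at least `ρ*`. Conversely, write each coordinate of a
feasible `(x, y)` as a layer-cake integral `a = ∫_{r > 0} [r ≤ a] dr`. At level `r` the edges with
`r ≤ y e` lie in `E(S_r)` for the superlevel set `S_r = {v | r ≤ x v}`, so there are at most
`ρ* |S_r|` of them; integrating over `r` gives `∑ y e ≤ ρ* ∑ x v ≤ ρ*`.
-/

open MeasureTheory Finset

theorem indicator_Iic_one_eq_ite (a : ℝ) :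
    (Set.Iic a).indicator 1 = fun r : ℝ => if r ≤ a then (1 : ℝ) else 0 := by
  ext r; simp [Set.indicator_apply]

theorem integrableOn_Ioi_ite_le (a : ℝ) :
    IntegrableOn (fun r : ℝ => if r ≤ a then (1 : ℝ) else 0) (Set.Ioi 0) := by
  rw [← indicator_Iic_one_eq_ite, integrableOn_indicator_iff measurableSet_Iic, Set.Iic_inter_Ioi]
  exact integrableOn_const measure_Ioc_lt_top.ne

theorem setIntegral_Ioi_ite_le {a : ℝ} (ha : 0 ≤ a) :
    ∫ r in Set.Ioi 0, (if r ≤ a then (1 : ℝ) else 0) = a := by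
  rw [← indicator_Iic_one_eq_ite, setIntegral_indicator measurableSet_Iic, Set.Ioi_inter_Iic]
  simp [Real.volume_real_Ioc_of_le ha]

theorem integrableOn_Ioi_sum_ite_le {ι : Type*} (s : Finset ι) (f : ι → ℝ) :
    IntegrableOn (fun r : ℝ => ∑ i ∈ s, if r ≤ f i then (1 : ℝ) else 0) (Set.Ioi 0) :=
  integrable_finsetSum s fun i _ => integrableOn_Ioi_ite_le (f i)

theorem sum_eq_setIntegral_Ioi_sum_ite_le {ι : Type*} (s : Finset ι) {f : ι → ℝ}
    (hf : ∀ i ∈ s, 0 ≤ f i) :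
    ∑ i ∈ s, f i = ∫ r in Set.Ioi 0, ∑ i ∈ s, if r ≤ f i then (1 : ℝ) else 0 := by
  rw [integral_finsetSum s fun i _ => integrableOn_Ioi_ite_le (f i)]
  exact sum_congr rfl fun i hi => (setIntegral_Ioi_ite_le (hf i hi)).symm

namespace DensestSubgraph

variable {V : Type*} [Fintype V]

def lpValues (E : Finset (Sym2 V)) : Set ℝ :=
  {t | ∃ (x : V → ℝ) (y : Sym2 V → ℝ), (∀ v, 0 ≤ x v) ∧ (∀ e, 0 ≤ y e) ∧ (∑ v, x v ≤ 1) ∧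
    (∀ e ∈ E, ∀ v ∈ e, y e ≤ x v) ∧ t = ∑ e ∈ E, y e}

theorem zero_mem_lpValues (E : Finset (Sym2 V)) : (0 : ℝ) ∈ lpValues E :=
  ⟨0, 0, fun _ => le_rfl, fun _ => le_rfl, by simp, fun _ _ _ _ => le_rfl, by simp⟩

variable [DecidableEq V]

def edgesWithin (E : Finset (Sym2 V)) (S : Finset V) : Finset (Sym2 V) :=
  E.filter fun e => ∀ v ∈ e, v ∈ S

def densities (E : Finset (Sym2 V)) : Set ℝ :=
  {t | ∃ S : Finset V, S.Nonempty ∧ t = (#(edgesWithin E S) : ℝ) / #S}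

variable (E : Finset (Sym2 V))

@[simp]
theorem edgesWithin_empty : edgesWithin E ∅ = ∅ :=
  filter_false_of_mem fun e _ h => notMem_empty _ (h _ e.out_fst_mem)

theorem densities_nonneg : ∀ t ∈ densities E, 0 ≤ t := by
  rintro t ⟨S, -, rfl⟩
  positivity

theorem bddAbove_densities : BddAbove (densities E) := by
  refine ⟨#E, ?_⟩
  rintro t ⟨S, hS, rfl⟩
  have hS : (1 : ℝ) ≤ #S := by exact_mod_cast hS.card_pos
  calc (#(edgesWithin E S) : ℝ) / #S ≤ #(edgesWithin E S) := div_le_self (by positivity) hS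
    _ ≤ #E := by exact_mod_cast card_filter_le _ _

theorem card_edgesWithin_le_sSup_densities_mul (S : Finset V) :
    (#(edgesWithin E S) : ℝ) ≤ sSup (densities E) * #S := by
  rcases S.eq_empty_or_nonempty with rfl | hS
  · simp
  · have hS' : (0 : ℝ) < #S := by exact_mod_cast hS.card_pos
    rw [← div_le_iff₀ hS']
    exact le_csSup (bddAbove_densities E) ⟨S, hS, rfl⟩

theorem card_filter_le_le_mul_card_filter_le {ρ : ℝ} (hρ : ∀ S, (#(edgesWithin E S) : ℝ) ≤ ρ * #S)
    {x : V → ℝ} {y : Sym2 V → ℝ} (hyx : ∀ e ∈ E, ∀ v ∈ e, y e ≤ x v) (r : ℝ) :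
    (#(E.filter fun e => r ≤ y e) : ℝ) ≤ ρ * #(univ.filter fun v => r ≤ x v) := by
  refine le_trans ?_ (hρ _)
  refine Nat.cast_le.2 (card_le_card fun e he => ?_)
  rw [mem_filter] at he
  exact mem_filter.2 ⟨he.1, fun v hv => mem_filter.2 ⟨mem_univ v, he.2.trans (hyx e he.1 v hv)⟩⟩

theorem sum_le_mul_sum_of_card_edgesWithin_le {ρ : ℝ}
    (hρ : ∀ S, (#(edgesWithin E S) : ℝ) ≤ ρ * #S) {x : V → ℝ} {y : Sym2 V → ℝ}
    (hx : ∀ v, 0 ≤ x v) (hy : ∀ e ∈ E, 0 ≤ y e) (hyx : ∀ e ∈ E, ∀ v ∈ e, y e ≤ x v) :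
    ∑ e ∈ E, y e ≤ ρ * ∑ v, x v := by
  rw [sum_eq_setIntegral_Ioi_sum_ite_le E hy,
    sum_eq_setIntegral_Ioi_sum_ite_le univ fun v _ => hx v, ← integral_const_mul]
  refine setIntegral_mono (integrableOn_Ioi_sum_ite_le E y)
    ((integrableOn_Ioi_sum_ite_le univ x).const_mul ρ) fun r => ?_
  simp only [sum_boole]
  exact card_filter_le_le_mul_card_filter_le E hρ hyx r

theorem card_edgesWithin_div_card_mem_lpValues {S : Finset V} (hS : S.Nonempty) :
    (#(edgesWithin E S) : ℝ) / #S ∈ lpValues E := by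
  have hS' : (#S : ℝ) ≠ 0 := by exact_mod_cast hS.card_pos.ne'
  refine ⟨fun v => if v ∈ S then (#S : ℝ)⁻¹ else 0,
    fun e => if ∀ v ∈ e, v ∈ S then (#S : ℝ)⁻¹ else 0,
    fun v => by positivity, fun e => by positivity, ?_, fun e _ v hv => ?_, ?_⟩
  · rw [sum_ite_mem, univ_inter, sum_const, nsmul_eq_mul, mul_inv_cancel₀ hS']
  · dsimp only
    by_cases h : ∀ w ∈ e, w ∈ S
    · rw [if_pos h, if_pos (h v hv)]
    · rw [if_neg h]; positivity
  · rw [sum_ite, sum_const_zero, add_zero, sum_const, nsmul_eq_mul, div_eq_mul_inv]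
    rfl

theorem le_sSup_densities_of_mem_lpValues {t : ℝ} (ht : t ∈ lpValues E) :
    t ≤ sSup (densities E) := by
  obtain ⟨x, y, hx, hy, hsum, hyx, rfl⟩ := ht
  have hρ := Real.sSup_nonneg (densities_nonneg E)
  calc ∑ e ∈ E, y e ≤ sSup (densities E) * ∑ v, x v :=
        sum_le_mul_sum_of_card_edgesWithin_le E (card_edgesWithin_le_sSup_densities_mul E)
          hx (fun e _ => hy e) hyx
    _ ≤ sSup (densities E) := mul_le_of_le_one_right hρ hsum

theorem sSup_lpValues_eq_sSup_densities : sSup (lpValues E) = sSup (densities E) := by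
  have hbdd : BddAbove (lpValues E) := ⟨_, fun t => le_sSup_densities_of_mem_lpValues E⟩
  refine le_antisymm (Real.sSup_le (fun t => le_sSup_densities_of_mem_lpValues E)
    (Real.sSup_nonneg (densities_nonneg E))) (Real.sSup_le ?_ (le_csSup hbdd (zero_mem_lpValues E)))
  rintro t ⟨S, hS, rfl⟩
  exact le_csSup hbdd (card_edgesWithin_div_card_mem_lpValues E hS)

end DensestSubgraph

open Classical in
theorem charikar_lp_densest_subgraph_general
    (V : Type*) [Fintype V] [DecidableEq V]
    (G : SimpleGraph V) [DecidableRel G.Adj] :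
    sSup {t : ℝ | ∃ (x : V → ℝ) (y : Sym2 V → ℝ),
        (∀ v, 0 ≤ x v) ∧ (∀ e, 0 ≤ y e) ∧ (∑ v, x v ≤ 1) ∧
        (∀ e ∈ G.edgeFinset, ∀ v ∈ e, y e ≤ x v) ∧
        t = ∑ e ∈ G.edgeFinset, y e}
      = sSup {t : ℝ | ∃ S : Finset V, S.Nonempty ∧
          t = ((G.edgeFinset.filter fun e => ∀ v ∈ e, v ∈ S).card : ℝ) / S.card} :=
  DensestSubgraph.sSup_lpValues_eq_sSup_densities G.edgeFinset

open Classical in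
theorem charikar_lp_densest_subgraph
    (V : Type*) [Fintype V] [DecidableEq V] [Nonempty V]
    (G : SimpleGraph V) [DecidableRel G.Adj] :
    sSup {t : ℝ | ∃ (x : V → ℝ) (y : Sym2 V → ℝ),
        (∀ v, 0 ≤ x v) ∧ (∀ e, 0 ≤ y e) ∧ (∑ v, x v ≤ 1) ∧
        (∀ e ∈ G.edgeFinset, ∀ v ∈ e, y e ≤ x v) ∧
        t = ∑ e ∈ G.edgeFinset, y e}
      = sSup {t : ℝ | ∃ S : Finset V, S.Nonempty ∧
          t = ((G.edgeFinset.filter fun e => ∀ v ∈ e, v ∈ S).card : ℝ) / S.card} :=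
  charikar_lp_densest_subgraph_general V G
end
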